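/- Σ⁰₂-de Morgan's law for the reals is Weihrauch equivalent to Ramsey's theorem for singletons and two colors: Σ⁰₂-DML_ℝ ≡_W RT¹₂. -/

import Mathlib

open scoped Classical

noncomputable section

/-- Baire space. -/
abbrev Baire : Type := ℕ → ℕ

/-- A partial multifunction with explicit domain. -/
structure MultiFn (α : Type*) where
  Dom : Set α
  val : α → Set α

/-- The length-`k` prefix of `x` as a list. -/
def prefixList (x : Baire) (k : ℕ) : List ℕ := List.ofFn fun i : Fin k => x i

/-- The raw behaviour of the (code of a) partial continuous function `t` on the
finite input `l` at position `n`. -/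
def raw (t : Baire) (l : List ℕ) (n : ℕ) : Option ℕ :=
  match t (Nat.pair (Encodable.encode l) n) with
  | 0 => none
  | Nat.succ v => some v

/-- `evalB t x y` : the partial (continuous) function coded by `t` is defined at `x`
with value `y`; each value `y n` is read off at the minimal prefix of `x` on which
the code converges. Every such function is continuous, and every partial continuous
function on Baire space arises this way. -/
def evalB (t x y : Baire) : Prop :=
  ∀ n, ∃ k, raw t (prefixList x k) n = some (y n) ∧
    ∀ j < k, raw t (prefixList x j) n = none

/-- Pairing on Baire space. -/
def pairB (x y : Baire) : Baire := fun n => Nat.pair (x n) (y n)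

def fstB (z : Baire) : Baire := fun n => (Nat.unpair (z n)).1

def sndB (z : Baire) : Baire := fun n => (Nat.unpair (z n)).2

/-- Weihrauch reduction of `f` to `g` witnessed by an inner reduction (code) `h`
and an outer reduction (code) `k`. -/
def WRedBy (f g : MultiFn Baire) (h k : Baire) : Prop :=
  ∀ x ∈ f.Dom, ∃ hx, evalB h x hx ∧ hx ∈ g.Dom ∧
    ∀ y ∈ g.val hx, ∃ z, evalB k (pairB x y) z ∧ z ∈ f.val x

/-- Weihrauch reducibility (computable reductions). -/
def WRed (f g : MultiFn Baire) : Prop :=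
  ∃ h k : Baire, Computable h ∧ Computable k ∧ WRedBy f g h k

/-- Continuous Weihrauch reducibility. -/
def WRedC (f g : MultiFn Baire) : Prop := ∃ h k : Baire, WRedBy f g h k

/-- Weihrauch equivalence. -/
def WEquiv (f g : MultiFn Baire) : Prop := WRed f g ∧ WRed g f

/-! ## Reduction games -/

/-- Merge a finite list of Baire points into a single Baire point. -/
def mergeList (l : List Baire) : Baire := fun n =>
  if n = 0 then l.length
  else l.getD (Nat.unpair (n - 1)).1 (fun _ => 0) (Nat.unpair (n - 1)).2

/-- Encode a move of Player II (a flag together with a Baire point) as a Baire point;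
the flag `true` means "declare victory", `false` means "query". -/
def encodeMove (m : Bool × Baire) : Baire := fun n =>
  if n = 0 then (if m.1 then 1 else 0) else m.2 (n - 1)

/-- `τ` is a (total continuous) strategy for Player II coded by the Baire point `t`. -/
def StrategyCoded (t : Baire) (τ : List Baire → Bool × Baire) : Prop :=
  ∀ l : List Baire, evalB t (mergeList l) (encodeMove (τ l))

/-- The history of the play where Player I uses `σ` and Player II uses `τ`:
after round `n`, the lists of the moves of I and of II so far. Player I's
first move is `σ []`. -/
def hist (σ : List (Bool × Baire) → Baire) (τ : List Baire → Bool × Baire) :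
    ℕ → List Baire × List (Bool × Baire)
  | 0 => ([σ []], [τ [σ []]])
  | n + 1 =>
    let h := hist σ τ n
    let x := σ h.2
    (h.1 ++ [x], h.2 ++ [τ (h.1 ++ [x])])

/-- Player I's move at round `n`. -/
def xmove (σ : List (Bool × Baire) → Baire) (τ : List Baire → Bool × Baire)
    (n : ℕ) : Baire :=
  (hist σ τ n).1.getD n (fun _ => 0)

/-- Player II's move at round `n`. -/
def ymove (σ : List (Bool × Baire) → Baire) (τ : List Baire → Bool × Baire)
    (n : ℕ) : Bool × Baire :=
  (hist σ τ n).2.getD n (true, fun _ => 0)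

/-- Player I violates the rules of the game `G(f,g)` at round `m`. -/
def IViol (f g : MultiFn Baire) (σ : List (Bool × Baire) → Baire)
    (τ : List Baire → Bool × Baire) (m : ℕ) : Prop :=
  (m = 0 ∧ xmove σ τ 0 ∉ f.Dom) ∨
  (∃ m', m = m' + 1 ∧ (ymove σ τ m').1 = false ∧
    xmove σ τ m ∉ g.val (ymove σ τ m').2)

/-- Player II violates the rules of the game `G(f,g)` at round `m`
(II queried something outside the domain of `g`). -/
def IIViol (g : MultiFn Baire) (σ : List (Bool × Baire) → Baire)
    (τ : List Baire → Bool × Baire) (m : ℕ) : Prop :=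
  (ymove σ τ m).1 = false ∧ (ymove σ τ m).2 ∉ g.Dom

/-- Player II wins the play of `G(f,g)` determined by `σ` and `τ` :
either I violates the rules before II does, or II obeys the rules and
declares victory with an element of `f(x₀)`. -/
def IIWinsPlay (f g : MultiFn Baire) (σ : List (Bool × Baire) → Baire)
    (τ : List Baire → Bool × Baire) : Prop :=
  (∃ m, IViol f g σ τ m ∧ ∀ k < m, ¬ IIViol g σ τ k) ∨
  (∃ m, (∀ k < m, (ymove σ τ k).1 = false) ∧ (ymove σ τ m).1 = true ∧
    (∀ k ≤ m, ¬ IIViol g σ τ k) ∧ (ymove σ τ m).2 ∈ f.val (xmove σ τ 0))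

/-- Generalized Weihrauch reducibility: Player II has a computable winning
strategy in the reduction game `G(f,g)`. -/
def GWRed (f g : MultiFn Baire) : Prop :=
  ∃ (t : Baire) (τ : List Baire → Bool × Baire),
    Computable t ∧ StrategyCoded t τ ∧ ∀ σ, IIWinsPlay f g σ τ

/-- Continuous generalized Weihrauch reducibility: Player II has a continuous
winning strategy in the reduction game `G(f,g)`. -/
def GWRedC (f g : MultiFn Baire) : Prop :=
  ∃ (t : Baire) (τ : List Baire → Bool × Baire),
    StrategyCoded t τ ∧ ∀ σ, IIWinsPlay f g σ τ

/-- The multifunction `g^Game` arising from the reduction game for `g`: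
an input encodes a pair `(x₀, t)` where `t` codes a strategy `τ` for Player II
which declares victory against every play of Player I with first move `x₀`;
outputs are the values with which II declares victory along some such play. -/
def gameOf (g : MultiFn Baire) : MultiFn Baire where
  Dom := {z | ∃ τ, StrategyCoded (sndB z) τ ∧
    ∀ σ, σ [] = fstB z → ∃ m, (ymove σ τ m).1 = true}
  val := fun z => {u | ∃ τ, StrategyCoded (sndB z) τ ∧
    ∃ σ, σ [] = fstB z ∧ ∃ m, (ymove σ τ m).1 = true ∧ (ymove σ τ m).2 = u}

/-! ## Compositional products, parallelizations, coproducts -/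

/-- Composition of partial multifunctions. -/
def mcomp (h g : MultiFn Baire) : MultiFn Baire where
  Dom := {x | x ∈ g.Dom ∧ g.val x ⊆ h.Dom}
  val := fun x => ⋃ y ∈ g.val x, h.val y

/-- `s` is a compositional product `h ⋆ g` : a Weihrauch-minimal element of the
set of compositions `h₀ ∘ g₀` with `g₀ ≤_W g` and `h₀ ≤_W h`. -/
def IsCompProd (h g s : MultiFn Baire) : Prop :=
  (∃ g₀ h₀, WRed g₀ g ∧ WRed h₀ h ∧ WEquiv s (mcomp h₀ g₀)) ∧
  (∀ g₀ h₀, WRed g₀ g → WRed h₀ h → WRed s (mcomp h₀ g₀))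

def tupLen (z : Baire) : ℕ := z 0

def tupProj (z : Baire) (i : ℕ) : Baire := fun m => z (Nat.pair i m + 1)

/-- Finite parallelization `f*`. -/
def finPar (f : MultiFn Baire) : MultiFn Baire where
  Dom := {z | ∀ i < tupLen z, tupProj z i ∈ f.Dom}
  val := fun z => {w | tupLen w = tupLen z ∧
    ∀ i < tupLen z, tupProj w i ∈ f.val (tupProj z i)}

/-- Product of two multifunctions. -/
def prodMF (f g : MultiFn Baire) : MultiFn Baire where
  Dom := {z | fstB z ∈ f.Dom ∧ sndB z ∈ g.Dom}
  val := fun z => {w | fstB w ∈ f.val (fstB z) ∧ sndB w ∈ g.val (sndB z)}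

def tailB (z : Baire) : Baire := fun n => z (n + 1)

/-- Coproduct (disjoint union) of a sequence of multifunctions. -/
def coprod (s : ℕ → MultiFn Baire) : MultiFn Baire where
  Dom := {z | tailB z ∈ (s (z 0)).Dom}
  val := fun z => (s (z 0)).val (tailB z)

/-- The identity multifunction (the Weihrauch degree `1`). -/
def idMF : MultiFn Baire := ⟨Set.univ, fun x => {x}⟩

/-! ## Trees -/

def IsTree (T : Set (List Bool)) : Prop := ∀ σ ∈ T, ∀ τ, τ <+: σ → τ ∈ T

def InfTree (T : Set (List Bool)) : Prop := ∀ ℓ, ∃ σ ∈ T, σ.length = ℓ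

def IsPathOf (T : Set (List Bool)) (p : ℕ → Bool) : Prop :=
  ∀ n, (List.ofFn fun i : Fin n => p i) ∈ T

/-- An all-or-unique tree: at each level, either all strings or exactly one. -/
def AouTree (T : Set (List Bool)) : Prop :=
  IsTree T ∧ ∀ ℓ, ({σ | σ ∈ T ∧ σ.length = ℓ} = {σ : List Bool | σ.length = ℓ} ∨
    ∃ σ₀, {σ | σ ∈ T ∧ σ.length = ℓ} = {σ₀})

/-- A 2-tree: exactly two nodes at each (positive) level. -/
def TwoTree (T : Set (List Bool)) : Prop :=
  IsTree T ∧ ∀ ℓ > 0, ∃ a b : List Bool, a ≠ b ∧ {σ | σ ∈ T ∧ σ.length = ℓ} = {a, b}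

def BranchNodes (T : Set (List Bool)) : Set (List Bool) :=
  {σ | σ ++ [false] ∈ T ∧ σ ++ [true] ∈ T}

/-- A rational 2-tree: a 2-tree with only finitely many branching nodes. -/
def RatTwoTree (T : Set (List Bool)) : Prop := TwoTree T ∧ (BranchNodes T).Finite

/-- A basic clopen tree: the set of strings comparable with a fixed string. -/
def BasicClopenTree (T : Set (List Bool)) : Prop :=
  ∃ σ : List Bool, T = {τ | τ <+: σ ∨ σ <+: τ}

/-- A Baire point codes a tree by its characteristic function. -/
def treeOf (x : Baire) : Set (List Bool) := {σ | x (Encodable.encode σ) = 1}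

/-- A Baire point codes an infinite binary sequence. -/
def pathOf (y : Baire) : ℕ → Bool := fun n => y n != 0

/-- Weak König's lemma restricted to the class `C` of trees, as a multifunction. -/
def WKLof (C : Set (List Bool) → Prop) : MultiFn Baire where
  Dom := {x | C (treeOf x) ∧ InfTree (treeOf x)}
  val := fun x => {y | IsPathOf (treeOf x) (pathOf y)}

def WKL : MultiFn Baire := WKLof IsTree
def WKLle2 : MultiFn Baire := WKLof TwoTree
def WKLeq2 : MultiFn Baire := WKLof RatTwoTree
def WKLaou : MultiFn Baire := WKLof AouTree
def WKLclop : MultiFn Baire := WKLof BasicClopenTree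

/-! ## Arithmetical principles as multifunctions -/

/-- The discrete limit operator on ℕ. -/
def LimN : MultiFn Baire where
  Dom := {x | ∃ v N, ∀ n ≥ N, x n = v}
  val := fun x => {u | ∃ v, (∀ m, u m = v) ∧ ∃ N, ∀ n ≥ N, x n = v}

/-- `Σ⁰₂` double negation elimination, as a multifunction: the input codes a
decidable relation `R(n,m) ≡ α(⟨n,m⟩) = 0` with `¬¬∃n∀m R(n,m)`; outputs code
some `n` with `∀m R(n,m)`. -/
def DNE2 : MultiFn Baire where
  Dom := {α | ¬¬ ∃ n, ∀ m, α (Nat.pair n m) = 0}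
  val := fun α => {u | ∃ n, (∀ m, u m = n) ∧ ∀ m, α (Nat.pair n m) = 0}

/-- Ramsey's theorem for singletons and two colours. -/
def RT12 : MultiFn Baire where
  Dom := {c | ∀ n, c n ≤ 1}
  val := fun c => {h | (∀ n, h n ≤ 1) ∧ {n | h n = 1}.Infinite ∧
    ∃ i, ∀ n, h n = 1 → c n = i}

/-- The `i`-th `Σ⁰₂` statement coded by `α`. -/
def Sig2 (α : Baire) (i : ℕ) : Prop := ∃ a, ∀ b, α (Nat.pair i (Nat.pair a b)) = 0

/-- `Σ⁰₂` de Morgan's law, as a multifunction. -/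
def DML2 : MultiFn Baire where
  Dom := {α | ¬ (Sig2 α 0 ∧ Sig2 α 1)}
  val := fun α => {u | ∃ j ≤ 1, (∀ m, u m = j) ∧ ¬ Sig2 α j}

/-- The limited principle of omniscience. -/
def LPO : MultiFn Baire where
  Dom := Set.univ
  val := fun p => {u | ((∀ n, u n = 0) ∧ ∀ n, p n = 0) ∨
    ((∀ n, u n = 1) ∧ ∃ n, p n ≠ 0)}

/-- A semicontinuous bound for a (finite-valued) multifunction `f`: a partial
continuous `g` (coded by `t`) and a lower semicontinuous `b` such that
`f(x) ⊆ {g(x,n) : n < b(x)}`. -/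
def SemicontBound (f : MultiFn Baire) : Prop :=
  ∃ (t : Baire) (b : Baire → ℕ), LowerSemicontinuousOn b f.Dom ∧
    ∀ x ∈ f.Dom, f.val x ⊆ {y | ∃ n < b x, evalB t (pairB x (fun _ => n)) y}

/-! ## Relative partial combinatory algebras and jump operators -/

def app2 {α : Type*} (m : α → α → Option α) (a b c : α) : Option α :=
  (m a b).bind fun ab => m ab c

/-- `(P, α, m)` is a relative partial combinatory algebra: there are combinators
`k, s ∈ P` (shared by the lightface part `P` and the boldface part `α`), `P` is
closed under the application, and `k`, `s` satisfy the usual specifications. -/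
def IsRelPCA {α : Type*} (m : α → α → Option α) (P : Set α) : Prop :=
  ∃ k ∈ P, ∃ s ∈ P,
    (∀ a ∈ P, ∀ b ∈ P, ∀ c, m a b = some c → c ∈ P) ∧
    (∀ a b : α, app2 m k a b = some a) ∧
    (∀ a b : α, ∃ c, app2 m s a b = some c) ∧
    (∀ a b c : α, (app2 m s a b).bind (fun x => m x c) =
      (m a c).bind fun ac => (m b c).bind fun bc => m ac bc)

/-- Composition of set-valued maps (empty value = undefined). -/
def mcompSet {α : Type*} (j₁ j₂ : α → Set α) (x : α) : Set α :=
  {z | (∀ y ∈ j₂ x, (j₁ y).Nonempty) ∧ ∃ y ∈ j₂ x, z ∈ j₁ y}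

/-- `j` is an idempotent jump operator on the relative pca `(P, α, m)`. -/
def IdempotentJump {α : Type*} (m : α → α → Option α) (P : Set α)
    (j : α → Set α) : Prop :=
  (∃ u ∈ P, ∀ a x : α, ∃ w, app2 m u a x = some w ∧
    j w = {z | ∃ y ∈ j x, m a y = some z}) ∧
  (∃ ι ∈ P, ∀ x : α, ∃ w, m ι x = some w ∧ j w = {x}) ∧
  (∃ jj ∈ P, ∀ x : α, ∃ w, m jj x = some w ∧ j w = mcompSet j j x)

/-- `P_j = {a' : a ∈ P, j(a) = {a'}}`. -/
def Pjump {α : Type*} (P : Set α) (j : α → Set α) : Set α :=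
  {a' | ∃ a ∈ P, j a = {a'}}

/-- The new application `a ∗_j b = a' ∗ b` where `j(a) = {a'}`. -/
def appJ {α : Type*} (m : α → α → Option α) (j : α → Set α) (a b : α) : Option α :=
  if h : ∃ a', j a = {a'} then m h.choose b else none

/-- `f` is `(Q, j)`-realizable: some `a ∈ Q` satisfies `j(a x) ⊆ f(x)` for all
`x ∈ dom f`. -/
def JRealizable {α : Type*} (m : α → α → Option α) (Q : Set α) (j : α → Set α)
    (f : MultiFn α) : Prop :=
  ∃ a ∈ Q, ∀ x ∈ f.Dom, ∃ w, m a x = some w ∧ (j w).Nonempty ∧ j w ⊆ f.val x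

/-- The Kleene second algebra application. -/
def k2app (p x : Baire) : Option Baire :=
  if h : ∃ y, evalB p x y then some h.choose else none

/-- The lightface part of the Kleene–Vesley algebra: the computable points. -/
def KVP : Set Baire := {p | Computable p}

/-! ## Real-number principles -/

/-- A regular Cauchy sequence of rationals: `|q n - q m| < 2⁻ⁿ` for `m ≥ n`. -/
def RegCauchy (q : ℕ → ℚ) : Prop := ∀ n m, n ≤ m → |q n - q m| < ((2 : ℚ) ^ n)⁻¹

/-- `x` is the limit of the rational sequence `q`. -/
def limOf (q : ℕ → ℚ) (x : ℝ) : Prop :=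
  Filter.Tendsto (fun n => (q n : ℝ)) Filter.atTop (nhds x)

/-- The real with binary expansion `f`. -/
def binExp (f : ℕ → Bool) : ℝ := ∑' n, if f n then ((2 : ℝ)⁻¹) ^ (n + 1) else 0

/-- `x` is not irrational (stated negatively, as in `BE_ℚ`). -/
def NotIrrational (x : ℝ) : Prop := ¬ ∀ a b : ℤ, a ≠ 0 → (a : ℝ) * x ≠ (b : ℝ)

/-- The binary expansion principle for regular Cauchy rationals. -/
def BEQProp : Prop :=
  ∀ (q : ℕ → ℚ) (x : ℝ), RegCauchy q → limOf q x → x ∈ Set.Icc (0 : ℝ) 1 →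
    NotIrrational x → ∃ f : ℕ → Bool, x = binExp f

/-- Decode a Baire point as a sequence of rationals. -/
def qOf (z : Baire) (n : ℕ) : ℚ := ((Encodable.decode (z n) : Option ℚ)).getD 0

/-- `BE_ℚ` as a multifunction. -/
def BEQmf : MultiFn Baire where
  Dom := {z | RegCauchy (qOf z) ∧
    ∃ x, limOf (qOf z) x ∧ x ∈ Set.Icc (0 : ℝ) 1 ∧ NotIrrational x}
  val := fun z => {y | ∀ x, limOf (qOf z) x → x = binExp (pathOf y)}

/-- `f` is the rational piecewise linear map through the points listed in `l`. -/
def Interp (l : List (ℚ × ℚ)) (f : ℝ → ℝ) : Prop :=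
  (l.map Prod.fst).Pairwise (· < ·) ∧
  (∀ p ∈ l, f (p.1 : ℝ) = (p.2 : ℝ)) ∧
  ∀ i, i + 1 < l.length → ∀ t ∈ Set.Icc (0 : ℝ) 1,
    f ((1 - t) * ((l.getD i (0, 0)).1 : ℝ) + t * ((l.getD (i + 1) (0, 0)).1 : ℝ)) =
      (1 - t) * ((l.getD i (0, 0)).2 : ℝ) + t * ((l.getD (i + 1) (0, 0)).2 : ℝ)

/-- Every point of `l` lies in the `2^{-s-1}`-neighbourhood of the graph of `f`. -/
def ApproxStep (l : List (ℚ × ℚ)) (f : ℝ → ℝ) (s : ℕ) : Prop :=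
  ∀ p ∈ l, ∃ x : ℝ, |(p.1 : ℝ) - x| < (2 : ℝ)⁻¹ ^ (s + 1) ∧
    |(p.2 : ℝ) - f x| < (2 : ℝ)⁻¹ ^ (s + 1)

/-- The intermediate value theorem for rational piecewise linear maps given as
discrete limits. -/
def IVTlinProp : Prop :=
  ∀ (c : ℕ → List (ℚ × ℚ)) (f : ℕ → ℝ → ℝ),
    (∀ s, Interp (c s) (f s)) →
    (∀ s, ApproxStep (c (s + 1)) (f s) s) →
    (¬ ∀ s, ∃ t > s, c t ≠ c s) →
    ∀ s₀, (∀ s ≥ s₀, c s = c s₀) →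
      f s₀ 0 < 0 → 0 < f s₀ 1 → ∃ x ∈ Set.Icc (0 : ℝ) 1, f s₀ x = 0

/-- Decode a Baire point as a sequence of finite lists of rational points. -/
def cOf (z : Baire) (n : ℕ) : List (ℚ × ℚ) :=
  ((Encodable.decode (z n) : Option (List (ℚ × ℚ)))).getD []

/-- `IVT_lin` as a multifunction: the input codes a discrete-limit approximation
of a rational piecewise linear map with a sign change, and outputs are regular
Cauchy names of zeros. -/
def IVTlinMF : MultiFn Baire where
  Dom := {z | (∀ s, ∃ fs : ℝ → ℝ, Interp (cOf z s) fs) ∧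
    (∀ s, ∀ fs : ℝ → ℝ, Interp (cOf z s) fs → ApproxStep (cOf z (s + 1)) fs s) ∧
    (¬ ∀ s, ∃ t > s, cOf z t ≠ cOf z s) ∧
    (∀ s₀, (∀ s ≥ s₀, cOf z s = cOf z s₀) → ∀ g : ℝ → ℝ, Interp (cOf z s₀) g →
      g 0 < 0 ∧ 0 < g 1)}
  val := fun z => {y | RegCauchy (qOf y) ∧
    ∀ s₀, (∀ s ≥ s₀, cOf z s = cOf z s₀) → ∀ g : ℝ → ℝ, Interp (cOf z s₀) g →
      ∃ x, limOf (qOf y) x ∧ x ∈ Set.Icc (0 : ℝ) 1 ∧ g x = 0}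



/-!
For `DML2 ≤ RT12`, colour stage `s` by `1` iff the least `a < s` that still looks like a
witness for `ψ₀ ≡ ∃ a ∀ b, α ⟨0, a, b⟩ = 0` at stage `s` is at most the corresponding one
for `ψ₁`. If `ψᵢ` holds, its least candidate stays bounded, while `ψ₁₋ᵢ` fails and its least
candidate tends to infinity; so colour `i` occurs only finitely often. Hence the colour of an
infinite homogeneous set names a false `ψⱼ`.

For `RT12 ≤ DML2`, let `ψⱼ` say that colour `j` occurs only finitely often. Both cannot hold,
and a false `ψⱼ` makes `{n | c n = j}` an infinite homogeneous set.
-/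

/-- The code of the continuous functional which, at output position `n`, waits for the first
prefix `l` of the input with `D l n` and then outputs `G l n`. -/
def codeOf (D : List ℕ → ℕ → Bool) (G : List ℕ → ℕ → ℕ) : Baire := fun m =>
  (Option.map (fun l => bif D l (Nat.unpair m).2 then G l (Nat.unpair m).2 + 1 else 0)
    (Encodable.decode (Nat.unpair m).1 : Option (List ℕ))).getD 0

theorem raw_codeOf (D : List ℕ → ℕ → Bool) (G : List ℕ → ℕ → ℕ) (l : List ℕ) (n : ℕ) :
    raw (codeOf D G) l n = bif D l n then some (G l n) else none := by
  unfold raw codeOf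
  rw [Nat.unpair_pair]
  simp only [Encodable.encodek, Option.map_some, Option.getD_some]
  cases D l n <;> rfl

theorem evalB_codeOf {D : List ℕ → ℕ → Bool} {G : List ℕ → ℕ → ℕ} {x y : Baire}
    (hD : ∀ n, ∃ k, D (prefixList x k) n)
    (hG : ∀ n k, D (prefixList x k) n → G (prefixList x k) n = y n) :
    evalB (codeOf D G) x y := by
  intro n
  refine ⟨Nat.find (hD n), ?_, fun j hj => ?_⟩
  · rw [raw_codeOf, Nat.find_spec (hD n), hG n _ (Nat.find_spec (hD n))]
    rfl
  · rw [raw_codeOf, Bool.eq_false_iff.mpr (Nat.find_min (hD n) hj)]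
    rfl

theorem computable_codeOf {D : List ℕ → ℕ → Bool} {G : List ℕ → ℕ → ℕ}
    (hD : Primrec₂ D) (hG : Primrec₂ G) : Computable (codeOf D G) := by
  have hl : Primrec fun m : ℕ => (Encodable.decode (Nat.unpair m).1 : Option (List ℕ)) :=
    Primrec.decode.comp (Primrec.fst.comp Primrec.unpair)
  have hn : Primrec fun m : ℕ => (Nat.unpair m).2 := Primrec.snd.comp Primrec.unpair
  have hv : Primrec₂ fun (m : ℕ) (l : List ℕ) =>
      bif D l (Nat.unpair m).2 then G l (Nat.unpair m).2 + 1 else 0 :=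
    Primrec.cond (hD.comp Primrec.snd (hn.comp Primrec.fst))
      (Primrec.succ.comp (hG.comp Primrec.snd (hn.comp Primrec.fst))) (Primrec.const 0)
  exact (Primrec.option_getD.comp (Primrec.option_map hl hv) (Primrec.const 0)).to_comp

@[simp]
theorem length_prefixList (x : Baire) (k : ℕ) : (prefixList x k).length = k := by
  simp [prefixList]

theorem prefixList_getD {x : Baire} {j k : ℕ} (h : j < k) :
    (prefixList x k).getD j 0 = x j := by
  simp [prefixList, h]

theorem le_pair_one_pair_self (s : ℕ) : s ≤ Nat.pair 1 (Nat.pair s s) :=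
  (Nat.right_le_pair s s).trans (Nat.right_le_pair 1 _)

section Colouring

variable (α : ℕ → ℕ)

def Survives (i s a : ℕ) : Prop := ∀ b < s, α (Nat.pair i (Nat.pair a b)) = 0

/-- The least `a < s` surviving stage `s`; equal to `s` when there is none. -/
def leastSurvivor (i s : ℕ) : ℕ :=
  (List.range s).findIdx fun a => decide (Survives α i s a)

def dmlColouring (s : ℕ) : ℕ :=
  if leastSurvivor α 0 s ≤ leastSurvivor α 1 s then 1 else 0

variable {α}

theorem dmlColouring_le_one (s : ℕ) : dmlColouring α s ≤ 1 := by
  unfold dmlColouring; split_ifs <;> simp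

theorem survives_leastSurvivor {i s : ℕ} (h : leastSurvivor α i s < s) :
    Survives α i s (leastSurvivor α i s) := by
  unfold leastSurvivor at h ⊢
  have := List.findIdx_getElem (xs := List.range s)
    (p := fun a => decide (Survives α i s a)) (w := by simpa using h)
  rw [List.getElem_range] at this
  simpa using this

theorem leastSurvivor_le {i s a : ℕ} (ha : Survives α i s a) : leastSurvivor α i s ≤ a := by
  by_contra! hlt
  have := List.not_of_lt_findIdx (p := fun a => decide (Survives α i s a)) hlt
  simp only [List.getElem_range, decide_eq_false_iff_not] at this
  exact this ha

theorem eventually_lt_leastSurvivor {i : ℕ} (h : ¬ Sig2 α i) (A : ℕ) :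
    ∀ᶠ s in Filter.atTop, A < leastSurvivor α i s := by
  simp only [Sig2, not_exists, not_forall] at h
  choose refute hrefute using h
  rw [Filter.eventually_atTop]
  refine ⟨A + 1 + ∑ a ∈ Finset.range (A + 1), refute a, fun s hs => ?_⟩
  by_contra! hle
  have hsurv := survives_leastSurvivor (α := α) (i := i) (s := s) (by omega)
  refine hrefute _ (hsurv _ ?_)
  have := Finset.single_le_sum (fun a _ => Nat.zero_le (refute a))
    (Finset.mem_range.2 (by omega : leastSurvivor α i s < A + 1))
  omega

theorem not_sig2_of_infinite_dmlColouring (hα : ¬ (Sig2 α 0 ∧ Sig2 α 1)) {i : ℕ}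
    (hinf : {s | dmlColouring α s = i}.Infinite) : ¬ Sig2 α i := by
  rintro ⟨a, ha⟩
  have hbound : ∀ s, leastSurvivor α i s ≤ a := fun s => leastSurvivor_le fun b _ => ha b
  have hfreq := Nat.frequently_atTop_iff_infinite.2 hinf
  rcases (show i = 0 ∨ i = 1 ∨ 2 ≤ i by omega) with rfl | rfl | hi
  · obtain ⟨s, hcol, hs⟩ := (hfreq.and_eventually
      (eventually_lt_leastSurvivor (fun h1 => hα ⟨⟨a, ha⟩, h1⟩) a)).exists
    simp [dmlColouring, (hbound s).trans hs.le] at hcol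
  · obtain ⟨s, hcol, hs⟩ := (hfreq.and_eventually
      (eventually_lt_leastSurvivor (fun h0 => hα ⟨h0, ⟨a, ha⟩⟩) a)).exists
    simp [dmlColouring, not_le.2 ((hbound s).trans_lt hs)] at hcol
  · obtain ⟨s, hcol⟩ := hfreq.exists
    have := dmlColouring_le_one (α := α) s
    omega

end Colouring

theorem dmlColouring_congr {f g : ℕ → ℕ} {s : ℕ}
    (h : ∀ j < Nat.pair 1 (Nat.pair s s), f j = g j) : dmlColouring f s = dmlColouring g s := by
  have hsurv : ∀ i ≤ 1, ∀ a ∈ List.range s,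
      decide (Survives f i s a) = decide (Survives g i s a) := by
    intro i hi a ha
    refine decide_eq_decide.2 (forall₂_congr fun b hb => ?_)
    rw [h]
    calc Nat.pair i (Nat.pair a b) < Nat.pair i (Nat.pair s s) :=
          Nat.pair_lt_pair_right i <| (Nat.pair_lt_pair_left b (List.mem_range.1 ha)).trans
            (Nat.pair_lt_pair_right s hb)
      _ ≤ Nat.pair 1 (Nat.pair s s) := by
          rcases hi.lt_or_eq with hi | rfl
          · exact (Nat.pair_lt_pair_left _ hi).le
          · rfl
  have hleast : ∀ i ≤ 1, leastSurvivor f i s = leastSurvivor g i s := fun i hi => by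
    unfold leastSurvivor
    simpa using congrArg (List.findIdx id) (List.map_congr_left (hsurv i hi))
  simp only [dmlColouring, hleast 0 zero_le_one, hleast 1 le_rfl]

theorem primrec_dmlColouring {β : Type*} [Primcodable β] {f : β → ℕ → ℕ} (hf : Primrec₂ f) :
    Primrec₂ fun x s => dmlColouring (f x) s := by
  have hleast : ∀ i, Primrec fun p : β × ℕ => leastSurvivor (f p.1) i p.2 := by
    intro i
    have hzero : PrimrecRel fun (b : ℕ) (q : (β × ℕ) × ℕ) =>
        f q.1.1 (Nat.pair i (Nat.pair q.2 b)) = 0 :=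
      Primrec.eq.comp (hf.comp (Primrec.fst.comp (Primrec.fst.comp Primrec.snd))
        (Primrec₂.natPair.comp (Primrec.const i)
          (Primrec₂.natPair.comp (Primrec.snd.comp Primrec.snd) Primrec.fst)))
        (Primrec.const 0)
    have hsurv : PrimrecRel fun (q : β × ℕ) (a : ℕ) => Survives (f q.1) i q.2 a :=
      ((PrimrecRel.forall_mem_list hzero).comp
        (Primrec.list_range.comp (Primrec.snd.comp Primrec.fst)) Primrec.id).of_eq
        fun q => by simp [Survives]
    exact Primrec.list_findIdx (Primrec.list_range.comp Primrec.snd) hsurv.decide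
  exact (Primrec.ite (Primrec.nat_le.comp (hleast 0) (hleast 1))
    (Primrec.const 1) (Primrec.const 0)).to₂

theorem findIdx_prefixList {x : Baire} {p : ℕ → Bool} {n₀ : ℕ} (hn₀ : p (x n₀))
    (hmin : ∀ m < n₀, p (x m) = false) (k : ℕ) : (prefixList x k).findIdx p = min n₀ k := by
  rcases lt_or_ge n₀ k with hk | hk
  · rw [min_eq_left hk.le, List.findIdx_eq (by simpa [prefixList] using hk)]
    simpa [prefixList] using ⟨hn₀, fun j hj => hmin j hj⟩
  · rw [min_eq_right hk, List.findIdx_eq_length.2]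
    · simp [prefixList]
    · simp only [prefixList, List.mem_ofFn, forall_exists_index]
      rintro _ m rfl
      exact hmin m (by omega)

/-- `lateOccurrence c ⟨j, a, b⟩ = 1` iff `b ≥ a` and `c b = j`. -/
def lateOccurrence (c : ℕ → ℕ) (m : ℕ) : ℕ :=
  if (Nat.unpair (Nat.unpair m).2).1 ≤ (Nat.unpair (Nat.unpair m).2).2 ∧
    c (Nat.unpair (Nat.unpair m).2).2 = (Nat.unpair m).1 then 1 else 0

theorem sig2_lateOccurrence_iff {c : ℕ → ℕ} {j : ℕ} :
    Sig2 (lateOccurrence c) j ↔ {n | c n = j}.Finite := by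
  simp only [Sig2, lateOccurrence, Nat.unpair_pair, ite_eq_right_iff, one_ne_zero, imp_false,
    not_and]
  rw [← Filter.eventually_atTop, ← Nat.cofinite_eq_atTop, Filter.eventually_cofinite]
  simp

theorem primrec_lateOccurrence {β : Type*} [Primcodable β] {f : β → ℕ → ℕ} (hf : Primrec₂ f) :
    Primrec₂ fun x m => lateOccurrence (f x) m := by
  have hj : Primrec fun p : β × ℕ => (Nat.unpair p.2).1 :=
    Primrec.fst.comp (Primrec.unpair.comp Primrec.snd)
  have hab : Primrec fun p : β × ℕ => Nat.unpair (Nat.unpair p.2).2 :=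
    Primrec.unpair.comp (Primrec.snd.comp (Primrec.unpair.comp Primrec.snd))
  exact (Primrec.ite
    (PrimrecPred.and (Primrec.nat_le.comp (Primrec.fst.comp hab) (Primrec.snd.comp hab))
      (Primrec.eq.comp (hf.comp Primrec.fst (Primrec.snd.comp hab)) hj))
    (Primrec.const 1) (Primrec.const 0)).to₂

def firstOne (l : List ℕ) : ℕ := l.findIdx fun v => decide ((Nat.unpair v).2 = 1)

def dml2ToRT12Inner : Baire :=
  codeOf (fun l s => decide (Nat.pair 1 (Nat.pair s s) < l.length))
    (fun l s => dmlColouring (fun j => l.getD j 0) s)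

/-- Reads off the first element `n₀` of the homogeneous set and outputs the constant
colour of `n₀`. -/
def dml2ToRT12Outer : Baire :=
  codeOf (fun l _ => decide (Nat.pair 1 (Nat.pair (firstOne l) (firstOne l)) < l.length))
    (fun l _ => dmlColouring (fun j => (Nat.unpair (l.getD j 0)).1) (firstOne l))

def rt12ToDML2Inner : Baire :=
  codeOf (fun l m => decide (m < l.length)) (fun l m => lateOccurrence (fun j => l.getD j 0) m)

def rt12ToDML2Outer : Baire :=
  codeOf (fun l n => decide (n < l.length))
    (fun l n => if (Nat.unpair (l.getD n 0)).1 = (Nat.unpair (l.getD 0 0)).2 then 1 else 0)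

theorem evalB_dml2ToRT12Inner (α : Baire) : evalB dml2ToRT12Inner α (dmlColouring α) :=
  evalB_codeOf (fun s => ⟨Nat.pair 1 (Nat.pair s s) + 1, by simp⟩)
    fun s k hk => dmlColouring_congr fun j hj => prefixList_getD <| by
      simp only [length_prefixList, decide_eq_true_eq] at hk; omega

theorem evalB_dml2ToRT12Outer {α y : Baire} {n₀ : ℕ} (hn₀ : y n₀ = 1)
    (hmin : ∀ m < n₀, y m ≠ 1) :
    evalB dml2ToRT12Outer (pairB α y) (fun _ => dmlColouring α n₀) := by
  have hfirst (k : ℕ) : firstOne (prefixList (pairB α y) k) = min n₀ k :=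
    findIdx_prefixList (by simpa [pairB] using hn₀)
      (fun m hm => by simpa [pairB] using hmin m hm) k
  have hle := le_pair_one_pair_self n₀
  refine evalB_codeOf (fun _ => ⟨Nat.pair 1 (Nat.pair n₀ n₀) + 1, ?_⟩) fun _ k hk => ?_
  · rw [hfirst, min_eq_left (by omega)]
    simp
  · rw [hfirst, length_prefixList, decide_eq_true_eq] at hk
    have hn₀k : n₀ < k := by
      by_contra! hkn
      rw [min_eq_right hkn] at hk
      exact absurd hk (not_lt.2 (le_pair_one_pair_self k))
    rw [min_eq_left hn₀k.le] at hk
    simp only [hfirst, min_eq_left hn₀k.le]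
    exact dmlColouring_congr fun j hj => by
      rw [prefixList_getD (hj.trans hk), pairB, Nat.unpair_pair]

theorem evalB_rt12ToDML2Inner (c : Baire) : evalB rt12ToDML2Inner c (lateOccurrence c) := by
  refine evalB_codeOf (fun m => ⟨m + 1, by simp⟩) fun m k hk => ?_
  rw [length_prefixList, decide_eq_true_eq] at hk
  have hb : (Nat.unpair (Nat.unpair m).2).2 < k :=
    ((Nat.unpair_right_le _).trans (Nat.unpair_right_le m)).trans_lt hk
  simp only [lateOccurrence, prefixList_getD hb]

theorem evalB_rt12ToDML2Outer {c y : Baire} {j : ℕ} (hy : ∀ m, y m = j) :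
    evalB rt12ToDML2Outer (pairB c y) (fun n => if c n = j then 1 else 0) := by
  refine evalB_codeOf (fun n => ⟨n + 1, by simp⟩) fun n k hk => ?_
  rw [length_prefixList, decide_eq_true_eq] at hk
  simp only [prefixList_getD hk, prefixList_getD (n.zero_le.trans_lt hk), pairB,
    Nat.unpair_pair, hy]

theorem computable_dml2ToRT12Inner : Computable dml2ToRT12Inner :=
  computable_codeOf
    (Primrec.nat_lt.comp
      (Primrec₂.natPair.comp (Primrec.const 1) (Primrec₂.natPair.comp Primrec.snd Primrec.snd))
      (Primrec.list_length.comp Primrec.fst)).decide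
    (primrec_dmlColouring (Primrec.list_getD 0))

theorem primrec_firstOne : Primrec firstOne :=
  Primrec.list_findIdx Primrec.id
    (Primrec.eq.comp (Primrec.snd.comp (Primrec.unpair.comp Primrec.snd))
      (Primrec.const 1)).decide

theorem computable_dml2ToRT12Outer : Computable dml2ToRT12Outer := by
  have hfirst : Primrec fun p : List ℕ × ℕ => firstOne p.1 := primrec_firstOne.comp Primrec.fst
  have hentry : Primrec₂ fun (l : List ℕ) (j : ℕ) => (Nat.unpair (l.getD j 0)).1 :=
    Primrec.fst.comp (Primrec.unpair.comp (Primrec.list_getD 0))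
  exact computable_codeOf
    (Primrec.nat_lt.comp (Primrec₂.natPair.comp (Primrec.const 1)
      (Primrec₂.natPair.comp hfirst hfirst)) (Primrec.list_length.comp Primrec.fst)).decide
    ((primrec_dmlColouring hentry).comp Primrec.fst hfirst)

theorem primrec_lt_length : Primrec₂ fun (l : List ℕ) (n : ℕ) => decide (n < l.length) :=
  (Primrec.nat_lt.comp Primrec.snd (Primrec.list_length.comp Primrec.fst)).decide

theorem computable_rt12ToDML2Inner : Computable rt12ToDML2Inner :=
  computable_codeOf primrec_lt_length (primrec_lateOccurrence (Primrec.list_getD 0))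

theorem computable_rt12ToDML2Outer : Computable rt12ToDML2Outer := by
  have hentry : Primrec₂ fun (l : List ℕ) (j : ℕ) => Nat.unpair (l.getD j 0) :=
    Primrec.unpair.comp (Primrec.list_getD 0)
  exact computable_codeOf primrec_lt_length
    (Primrec.ite (Primrec.eq.comp (Primrec.fst.comp hentry)
        (Primrec.snd.comp (hentry.comp Primrec.fst (Primrec.const 0))))
      (Primrec.const 1) (Primrec.const 0)).to₂

theorem wred_dml2_rt12 : WRed DML2 RT12 := by
  refine ⟨_, _, computable_dml2ToRT12Inner, computable_dml2ToRT12Outer, fun α hα =>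
    ⟨_, evalB_dml2ToRT12Inner α, dmlColouring_le_one, ?_⟩⟩
  rintro y ⟨-, hinf, i, hhom⟩
  have hH : ∃ n, y n = 1 := hinf.nonempty
  have hcol : dmlColouring α (Nat.find hH) = i := hhom _ (Nat.find_spec hH)
  refine ⟨_, evalB_dml2ToRT12Outer (Nat.find_spec hH) fun m hm => Nat.find_min hH hm,
    i, hcol ▸ dmlColouring_le_one _, fun _ => hcol, ?_⟩
  exact not_sig2_of_infinite_dmlColouring hα (hinf.mono hhom)

theorem wred_rt12_dml2 : WRed RT12 DML2 := by
  refine ⟨_, _, computable_rt12ToDML2Inner, computable_rt12ToDML2Outer, fun c hc =>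
    ⟨_, evalB_rt12ToDML2Inner c, ?_, ?_⟩⟩
  · rintro ⟨h0, h1⟩
    rw [sig2_lateOccurrence_iff] at h0 h1
    refine Set.infinite_univ ((h0.union h1).subset fun n _ => ?_)
    have := hc n
    show c n = 0 ∨ c n = 1
    omega
  · rintro y ⟨j, -, hy, hj⟩
    have hinf : {n | c n = j}.Infinite := fun h => hj (sig2_lateOccurrence_iff.2 h)
    refine ⟨_, evalB_rt12ToDML2Outer hy, fun n => ?_, by simpa using hinf, j, fun n hn => ?_⟩
    · dsimp only
      split_ifs <;> simp
    · simpa using hn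

/-- `Σ⁰₂-DML_ℝ ≡_W RT¹₂`. -/
theorem dml2_equiv_rt12 : WEquiv DML2 RT12 :=
  ⟨wred_dml2_rt12, wred_rt12_dml2⟩

end
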